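/- Let S be the greedy t-spanner of a finite point set. For any two distinct edges MN and PQ of S, the matching endpoint distances satisfy max(|MP|, |NQ|) ≥ ((t-1)/(2t)) · min(|MN|, |PQ|), where |XY| denotes the metric distance between X and Y. -/

import Mathlib

/-!
Say `PQ` is added after `MN`, and `|MP|, |NQ| < |PQ|` (otherwise there is nothing to prove).
Then the pairs `{P, M}` and `{N, Q}` were processed before `PQ`, so when `PQ` is examined the
greedy graph joins each of them by a path of length at most `t` times their distance. Together
with the edge `MN`, which is no longer than `PQ`, this gives a `P`–`Q` path of length at most
`2t · max(|MP|, |NQ|) + |PQ|`. Since `PQ` was nevertheless added, this exceeds `t · |PQ|`.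
-/

open Classical

noncomputable section

noncomputable section

/-- The length of a path given as a list of points: the sum of the metric
distances of consecutive points. -/
def chainLength {X : Type*} [PseudoMetricSpace X] : List X → ℝ
  | [] => 0
  | [_] => 0
  | a :: b :: rest => dist a b + chainLength (b :: rest)

/-- `p` is a path from `u` to `v` using only (undirected) edges from `E`. -/
def IsPathIn {X : Type*} (E : Set (X × X)) (p : List X) (u v : X) : Prop :=
  p ≠ [] ∧ p.head? = some u ∧ p.getLast? = some v ∧
    p.Chain' (fun a b => (a, b) ∈ E ∨ (b, a) ∈ E)

/-- One step of the naive greedy spanner algorithm: add the pair `e` as an edge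
unless a path of length at most `t · dist e.1 e.2` already exists. -/
def greedyStep {X : Type*} [PseudoMetricSpace X] (t : ℝ)
    (S : Finset (X × X)) (e : X × X) : Finset (X × X) :=
  if ∃ p : List X, IsPathIn (↑S) p e.1 e.2 ∧ chainLength p ≤ t * dist e.1 e.2
  then S else insert e S

/-- The naive greedy spanner algorithm run over a list of pairs. -/
def naiveGreedy {X : Type*} [PseudoMetricSpace X] (t : ℝ) (l : List (X × X)) :
    Finset (X × X) :=
  l.foldl (greedyStep t) ∅

section Paths

variable {X : Type*} {E : Set (X × X)}

lemma IsPathIn.mono {E' : Set (X × X)} (h : E ⊆ E') {p : List X} {u v : X}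
    (hp : IsPathIn E p u v) : IsPathIn E' p u v := by
  obtain ⟨hne, hhead, hlast, hchain⟩ := hp
  exact ⟨hne, hhead, hlast, hchain.imp fun _ _ => Or.imp (@h _) (@h _)⟩

lemma IsPathIn.reverse {p : List X} {u v : X} (hp : IsPathIn E p u v) :
    IsPathIn E p.reverse v u := by
  obtain ⟨hne, hhead, hlast, hchain⟩ := hp
  refine ⟨by simpa using hne, by rwa [List.head?_reverse], by rwa [List.getLast?_reverse], ?_⟩
  exact List.isChain_reverse.mpr (hchain.imp fun _ _ => Or.symm)

lemma IsPathIn.append {p q : List X} {u v w : X} (hp : IsPathIn E p u v)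
    (hq : IsPathIn E (v :: q) v w) : IsPathIn E (p ++ q) u w := by
  obtain ⟨hne, hhead, hlast, hchain⟩ := hp
  obtain ⟨-, -, hlast', hchain'⟩ := hq
  cases q with
  | nil =>
    obtain rfl : v = w := by simpa using hlast'
    rw [List.append_nil]
    exact ⟨hne, hhead, hlast, hchain⟩
  | cons b q =>
    refine ⟨by simp [hne], by rw [List.head?_append, hhead]; rfl, ?_, ?_⟩
    · rw [List.getLast?_append_of_ne_nil p (List.cons_ne_nil b q)]
      rwa [List.getLast?_cons_cons] at hlast'
    · refine List.isChain_append.mpr ⟨hchain, hchain'.tail, ?_⟩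
      intro x hx y hy
      rw [hlast, Option.mem_some_iff] at hx
      rw [List.head?_cons, Option.mem_some_iff] at hy
      subst hx hy
      exact (List.isChain_cons_cons.mp hchain').1

end Paths

section PathWithin

variable {X : Type*} [PseudoMetricSpace X]

lemma chainLength_append {p : List X} {a : X} (h : p.getLast? = some a) (q : List X) :
    chainLength (p ++ q) = chainLength p + chainLength (a :: q) := by
  induction p with
  | nil => simp at h
  | cons x p ih =>
    cases p with
    | nil =>
      obtain rfl : x = a := by simpa using h
      cases q <;> simp [chainLength]
    | cons y p =>
      rw [List.getLast?_cons_cons] at h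
      simp only [List.cons_append, chainLength] at ih ⊢
      rw [ih h]
      ring

lemma chainLength_reverse (p : List X) : chainLength p.reverse = chainLength p := by
  induction p with
  | nil => rfl
  | cons a p ih =>
    cases p with
    | nil => rfl
    | cons b p =>
      have hlast : (b :: p).reverse.getLast? = some b := by simp
      rw [List.reverse_cons, chainLength_append hlast, ih]
      simp only [chainLength]
      rw [dist_comm]
      ring

variable {E : Set (X × X)}

def PathWithin (E : Set (X × X)) (u v : X) (L : ℝ) : Prop :=
  ∃ p, IsPathIn E p u v ∧ chainLength p ≤ L

lemma pathWithin_refl (u : X) : PathWithin E u u 0 :=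
  ⟨[u], ⟨List.cons_ne_nil u [], rfl, rfl, List.isChain_singleton u⟩, le_rfl⟩

lemma pathWithin_of_mem {u v : X} (h : (u, v) ∈ E) : PathWithin E u v (dist u v) :=
  ⟨[u, v], ⟨List.cons_ne_nil u _, rfl, rfl, List.isChain_pair.mpr (Or.inl h)⟩,
    by simp [chainLength]⟩

lemma PathWithin.weaken {u v : X} {L L' : ℝ} (h : PathWithin E u v L) (hL : L ≤ L') :
    PathWithin E u v L' :=
  let ⟨p, hp, hlen⟩ := h
  ⟨p, hp, hlen.trans hL⟩

lemma PathWithin.mono {E' : Set (X × X)} (hE : E ⊆ E') {u v : X} {L : ℝ}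
    (h : PathWithin E u v L) : PathWithin E' u v L :=
  let ⟨p, hp, hlen⟩ := h
  ⟨p, hp.mono hE, hlen⟩

lemma PathWithin.symm {u v : X} {L : ℝ} (h : PathWithin E u v L) : PathWithin E v u L :=
  let ⟨p, hp, hlen⟩ := h
  ⟨p.reverse, hp.reverse, (chainLength_reverse p).trans_le hlen⟩

lemma PathWithin.trans {u v w : X} {L L' : ℝ} (h : PathWithin E u v L)
    (h' : PathWithin E v w L') : PathWithin E u w (L + L') := by
  obtain ⟨p, hp, hlen⟩ := h
  obtain ⟨q, hq, hlen'⟩ := h'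
  obtain ⟨q, rfl⟩ : ∃ q', q = v :: q' := by
    obtain ⟨hne, hhead, -⟩ := hq
    obtain _ | ⟨b, q'⟩ := q
    · exact absurd rfl hne
    · exact ⟨q', by simpa using hhead⟩
  refine ⟨p ++ q, hp.append hq, ?_⟩
  rw [chainLength_append hp.2.2.1]
  linarith

end PathWithin

lemma List.mem_left_of_lt_of_pairwise {α β : Type*} [LinearOrder β] {f : α → β}
    {L₁ L₂ : List α} {e c : α} (hsort : (L₁ ++ e :: L₂).Pairwise (fun a b => f a ≤ f b))
    (hc : c ∈ L₁ ++ e :: L₂) (hlt : f c < f e) : c ∈ L₁ := by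
  obtain ⟨-, hsort₂, -⟩ := List.pairwise_append.mp hsort
  rcases List.mem_append.mp hc with hc | hc | ⟨_, hc⟩
  · exact hc
  · exact absurd hlt (lt_irrefl _)
  · exact absurd ((List.pairwise_cons.mp hsort₂).1 c hc) hlt.not_ge

lemma List.le_of_mem_left_of_pairwise {α β : Type*} [LinearOrder β] {f : α → β}
    {L₁ L₂ : List α} {e c : α} (hsort : (L₁ ++ e :: L₂).Pairwise (fun a b => f a ≤ f b))
    (hc : c ∈ L₁) : f c ≤ f e :=
  (List.pairwise_append.mp hsort).2.2 c hc e List.mem_cons_self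

section Greedy

variable {X : Type*} [PseudoMetricSpace X] {t : ℝ}

lemma greedyStep_eq (S : Finset (X × X)) (e : X × X) :
    greedyStep t S e = if PathWithin ↑S e.1 e.2 (t * dist e.1 e.2) then S else insert e S :=
  rfl

lemma subset_foldl_greedyStep (S : Finset (X × X)) (l : List (X × X)) :
    S ⊆ l.foldl (greedyStep t) S := by
  induction l generalizing S with
  | nil => exact subset_rfl
  | cons a l ih =>
    refine subset_trans ?_ (ih _)
    rw [greedyStep_eq]
    split_ifs
    exacts [subset_rfl, Finset.subset_insert a S]

lemma foldl_greedyStep_subset (S : Finset (X × X)) (l : List (X × X)) :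
    l.foldl (greedyStep t) S ⊆ S ∪ l.toFinset := by
  induction l generalizing S with
  | nil => simp
  | cons a l ih =>
    refine (ih _).trans ?_
    rw [greedyStep_eq]
    split_ifs
    · exact Finset.union_subset_union subset_rfl (by simp)
    · intro e
      simp only [Finset.mem_union, Finset.mem_insert, List.mem_toFinset, List.mem_cons]
      tauto

lemma pathWithin_foldl_greedyStep (ht : 1 ≤ t) (S : Finset (X × X)) {l : List (X × X)}
    {e : X × X} (he : e ∈ l) :
    PathWithin ↑(l.foldl (greedyStep t) S) e.1 e.2 (t * dist e.1 e.2) := by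
  induction l generalizing S with
  | nil => simp at he
  | cons a l ih =>
    rcases List.mem_cons.mp he with rfl | he
    · refine PathWithin.mono (mod_cast subset_foldl_greedyStep _ l) ?_
      rw [greedyStep_eq]
      split_ifs with h
      · exact h
      · exact (pathWithin_of_mem (by simp)).weaken (le_mul_of_one_le_left dist_nonneg ht)
    · exact ih _ he

/-- The greedy algorithm on `l` adds `f` as an edge at a time when `e` is already one. -/
def AddedAfter (t : ℝ) (l : List (X × X)) (e f : X × X) : Prop :=
  ∃ L₁ L₂, l = L₁ ++ f :: L₂ ∧ ¬PathWithin ↑(naiveGreedy t L₁) f.1 f.2 (t * dist f.1 f.2) ∧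
    e ∈ naiveGreedy t L₁

lemma AddedAfter.append {l : List (X × X)} {e f : X × X} (h : AddedAfter t l e f)
    (l' : List (X × X)) : AddedAfter t (l ++ l') e f := by
  obtain ⟨L₁, L₂, rfl, hf, he⟩ := h
  exact ⟨L₁, L₂ ++ l', by simp, hf, he⟩

lemma addedAfter_or_addedAfter {l : List (X × X)} {e f : X × X} (he : e ∈ naiveGreedy t l)
    (hf : f ∈ naiveGreedy t l) (hef : e ≠ f) : AddedAfter t l e f ∨ AddedAfter t l f e := by
  induction l using List.reverseRecOn with
  | nil => simp [naiveGreedy] at he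
  | append_singleton l a ih =>
    have hstep : naiveGreedy t (l ++ [a]) = greedyStep t (naiveGreedy t l) a := by
      simp [naiveGreedy]
    rw [hstep, greedyStep_eq] at he hf
    split_ifs at he hf with hpath
    · exact (ih he hf).imp (·.append [a]) (·.append [a])
    · rcases Finset.mem_insert.mp he with rfl | he' <;>
        rcases Finset.mem_insert.mp hf with rfl | hf'
      · exact absurd rfl hef
      · exact Or.inr ⟨l, [], rfl, hpath, hf'⟩
      · exact Or.inl ⟨l, [], rfl, hpath, he'⟩
      · exact (ih he' hf').imp (·.append [a]) (·.append [a])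

end Greedy

lemma AddedAfter.sub_one_mul_dist_le {X : Type*} [PseudoMetricSpace X] {t : ℝ} (ht : 1 < t)
    {V : Finset X} {l : List (X × X)} (hV : ∀ e ∈ l, e.1 ∈ V ∧ e.2 ∈ V)
    (hsort : l.Pairwise (fun a b => dist a.1 a.2 ≤ dist b.1 b.2))
    (hcomp : ∀ u ∈ V, ∀ v ∈ V, u ≠ v → (u, v) ∈ l ∨ (v, u) ∈ l)
    {M N P Q : X} (h : AddedAfter t l (M, N) (P, Q)) :
    (t - 1) * dist P Q ≤ 2 * t * max (dist M P) (dist N Q) := by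
  obtain ⟨L₁, L₂, rfl, hfail, hMN⟩ := h
  set G := naiveGreedy t L₁
  have hmax_MP := le_max_left (dist M P) (dist N Q)
  have hmax_NQ := le_max_right (dist M P) (dist N Q)
  by_cases hfar : dist P Q ≤ max (dist M P) (dist N Q)
  · nlinarith [dist_nonneg (x := P) (y := Q)]
  rw [not_le] at hfar
  -- pairs shorter than `PQ` come before it in `l`, so `G` already spans them
  have hshort : ∀ u ∈ V, ∀ v ∈ V, dist u v < dist P Q → PathWithin ↑G u v (t * dist u v) := by
    intro u hu v hv huv
    rcases eq_or_ne u v with rfl | hne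
    · exact (pathWithin_refl u).weaken (by simp)
    rcases hcomp u hu v hv hne with huv_mem | hvu_mem
    · exact pathWithin_foldl_greedyStep ht.le ∅ (List.mem_left_of_lt_of_pairwise hsort huv_mem huv)
    · rw [dist_comm] at huv ⊢
      exact (pathWithin_foldl_greedyStep ht.le ∅
        (List.mem_left_of_lt_of_pairwise hsort hvu_mem huv)).symm
  have hMN_mem : (M, N) ∈ L₁ := by simpa using foldl_greedyStep_subset ∅ L₁ hMN
  obtain ⟨hMV, hNV⟩ := hV _ (List.mem_append_left _ hMN_mem)
  obtain ⟨hPV, hQV⟩ := hV _ (List.mem_append_right _ List.mem_cons_self)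
  have hMN_le : dist M N ≤ dist P Q := List.le_of_mem_left_of_pairwise hsort hMN_mem
  have hdetour : PathWithin ↑G P Q (t * dist P M + dist M N + t * dist N Q) :=
    ((hshort P hPV M hMV (by rw [dist_comm]; exact hmax_MP.trans_lt hfar)).trans
      (pathWithin_of_mem (mod_cast hMN))).trans (hshort N hNV Q hQV (hmax_NQ.trans_lt hfar))
  have hlong : t * dist P Q < t * dist M P + dist M N + t * dist N Q := by
    rw [← dist_comm P M]
    exact lt_of_not_ge fun hle => hfail (hdetour.weaken hle)
  have ht₀ : 0 ≤ t := by linarith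
  nlinarith [mul_le_mul_of_nonneg_left hmax_MP ht₀, mul_le_mul_of_nonneg_left hmax_NQ ht₀]

/-- **Endpoint-gap property of the greedy spanner.** For any two distinct edges
`MN` and `PQ` of the greedy `t`-spanner, the matching endpoint distances satisfy
`max(|MP|, |NQ|) ≥ ((t-1)/(2t)) · min(|MN|, |PQ|)`. -/
theorem greedy_endpoint_gap {X : Type*} [MetricSpace X] {t : ℝ} (ht : 1 < t)
    (V : Finset X) (l : List (X × X))
    (hmem : ∀ e ∈ l, e.1 ∈ V ∧ e.2 ∈ V ∧ e.1 ≠ e.2)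
    (hsort : List.Pairwise (fun a b => dist a.1 a.2 ≤ dist b.1 b.2) l)
    (hcomp : ∀ P ∈ V, ∀ Q ∈ V, P ≠ Q → (P, Q) ∈ l ∨ (Q, P) ∈ l)
    (M N P Q : X)
    (hMN : (M, N) ∈ naiveGreedy t l) (hPQ : (P, Q) ∈ naiveGreedy t l)
    (hne : (M, N) ≠ (P, Q) ∧ (M, N) ≠ (Q, P)) :
    (t - 1) / (2 * t) * min (dist M N) (dist P Q) ≤ max (dist M P) (dist N Q) := by
  have hV : ∀ e ∈ l, e.1 ∈ V ∧ e.2 ∈ V := fun e he => ⟨(hmem e he).1, (hmem e he).2.1⟩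
  have of_le_min : ∀ d, min (dist M N) (dist P Q) ≤ d →
      (t - 1) * d ≤ 2 * t * max (dist M P) (dist N Q) →
      (t - 1) / (2 * t) * min (dist M N) (dist P Q) ≤ max (dist M P) (dist N Q) := by
    intro d hd hgap
    have hcoeff : 0 ≤ (t - 1) / (2 * t) := div_nonneg (by linarith) (by linarith)
    calc _ ≤ (t - 1) / (2 * t) * d := mul_le_mul_of_nonneg_left hd hcoeff
      _ ≤ _ := by rw [div_mul_eq_mul_div, div_le_iff₀ (by linarith)]; linarith
  rcases addedAfter_or_addedAfter hMN hPQ hne.1 with hPQ_later | hMN_later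
  · exact of_le_min _ (min_le_right _ _) (hPQ_later.sub_one_mul_dist_le ht hV hsort hcomp)
  · have hgap := hMN_later.sub_one_mul_dist_le ht hV hsort hcomp
    rw [dist_comm P M, dist_comm Q N] at hgap
    exact of_le_min _ (min_le_left _ _) hgap

end
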